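/- The function Q satisfies the following system of difference equations, for all nonzero complex ζ_1,…,ζ_n, ξ_1,…,ξ_n for which all denominators appearing are nonzero: (1) for 1 ≤ i ≤ n−1, (ζ_{i+1}/ζ_i)^{C(n,k_0)} · ((z_i − q² z_{i+1})/(z_{i+1} − q² z_i))^{C(n−2,k_0−1)} · Q(…,ζ_i,ζ_{i+1},…|ξ) = Q(…,ζ_{i+1},ζ_i,…|ξ); (2) for 1 ≤ i ≤ n−1, (ξ_i/ξ_{i+1})^{C(n,k_0)} · ((u_i − q² u_{i+1})/(u_{i+1} − q² u_i))^{C(n−2,k_0−1)} · Q(ζ|…,ξ_i,ξ_{i+1},…) = Q(ζ|…,ξ_{i+1},ξ_i,…); (3) Q(q^{−2}ζ_1,ζ_2,…,ζ_n|ξ) = Q(ζ_2,…,ζ_n,ζ_1|ξ) · (−1)^{(n−1)C(n−2,k_0−1)} · (∏_{j=1}^n ζ_1/ξ_j)^{C(n,k_0)}; (4) Q(ζ|q²ξ_1,ξ_2,…,ξ_n) = Q(ζ|ξ_2,…,ξ_n,ξ_1) · (−1)^{(n−1)C(n−2,k_0−1)} · (∏_{j=1}^n ζ_j/ξ_1)^{C(n,k_0)}.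 -/

import Mathlib

open scoped BigOperators

/-- The infinite q-Pochhammer symbol `(z; p)_∞ = ∏_{k=0}^∞ (1 - p^k z)`. -/
noncomputable def poch (z p : ℂ) : ℂ := ∏' k : ℕ, (1 - p ^ k * z)

/-- The theta function `θ_p(z) = (z;p)_∞ (p z⁻¹;p)_∞ (p;p)_∞`. -/
noncomputable def thetaF (p z : ℂ) : ℂ := poch z p * poch (p * z⁻¹) p * poch p p

/-- `Q(ζ|ξ)` with `z_i = ζ_i²`, `u_i = ξ_i²`. -/
noncomputable def Qfun (n k₀ : ℕ) (q : ℂ) (ζ ξ : Fin n → ℂ) : ℂ :=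
  ((∏ j : Fin n, (ξ j / ζ j) ^ (n - 1))
      * ∏ a : Fin n, ∏ b : Fin n,
          if a < b then (ζ b ^ 2 - q ^ 2 * ζ a ^ 2) / (ξ a ^ 2 - q ^ 2 * ξ b ^ 2) else 1)
    ^ Nat.choose (n - 2) (k₀ - 1)
  * ((∏ j : Fin n, (ξ j / ζ j) ^ (j : ℕ))
      * thetaF (q ^ 2) (-(∏ j : Fin n, ξ j / ζ j))) ^ Nat.choose n k₀

/-- All the `u`-denominators of `Q(ζ|ξ')` are nonzero. -/
def QDenOK (n : ℕ) (q : ℂ) (ξ : Fin n → ℂ) : Prop :=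
  ∀ a b : Fin n, a < b → ξ a ^ 2 - q ^ 2 * ξ b ^ 2 ≠ 0

set_option maxRecDepth 8000
set_option maxHeartbeats 1000000
open Finset Filter

lemma hasProd_zero_of_eq_zero {f : ℕ → ℂ} (k : ℕ) (hk : f k = 0) : HasProd f 0 := by
  have h : ∀ᶠ s : Finset ℕ in atTop, (∏ i ∈ s, f i) = 0 := by
    refine Filter.eventually_atTop.2 ⟨{k}, fun s hs => ?_⟩
    exact Finset.prod_eq_zero (hs (Finset.mem_singleton_self k)) hk
  exact Tendsto.congr' (EventuallyEq.symm h) tendsto_const_nhds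

lemma multipliable_poch (p z : ℂ) (hp : ‖p‖ < 1) :
    Multipliable (fun k : ℕ => 1 - p ^ k * z) := by
  by_cases hz : ∀ k : ℕ, 1 - p ^ k * z ≠ 0
  · refine Complex.multipliable_of_summable_log ?_
    have hgeo : Summable (fun k : ℕ => 3 / 2 * (‖p‖ ^ k * ‖z‖)) :=
      (((summable_geometric_of_lt_one (norm_nonneg p) hp).mul_right _).mul_left _)
    refine Summable.of_norm_bounded_eventually_nat hgeo ?_
    have h0 : Tendsto (fun k : ℕ => ‖p‖ ^ k * ‖z‖) atTop (nhds 0) := by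
      simpa using (tendsto_pow_atTop_nhds_zero_of_lt_one (norm_nonneg p) hp).mul_const
        (‖z‖)
    have hev : ∀ᶠ k : ℕ in atTop, ‖p‖ ^ k * ‖z‖ ≤ 1 / 2 :=
      h0.eventually (eventually_le_nhds (by norm_num))
    filter_upwards [hev] with k hk
    have h1 : (1 : ℂ) - p ^ k * z = 1 + (-(p ^ k * z)) := by ring
    have h2 : ‖-(p ^ k * z)‖ = ‖p‖ ^ k * ‖z‖ := by
      simp [map_mul, map_pow]
    rw [h1]
    calc ‖Complex.log (1 + -(p ^ k * z))‖ ≤ 3 / 2 * ‖-(p ^ k * z)‖ :=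
          Complex.norm_log_one_add_half_le_self (by rw [h2]; exact hk)
      _ = 3 / 2 * (‖p‖ ^ k * ‖z‖) := by rw [h2]
  · push_neg at hz
    obtain ⟨k, hk⟩ := hz
    exact ⟨0, hasProd_zero_of_eq_zero k hk⟩

lemma tprod_shift (f : ℕ → ℂ) (hf : Multipliable f) (hg : Multipliable fun k => f (k + 1)) :
    ∏' k, f k = f 0 * ∏' k, f (k + 1) := by
  have h1 := hf.hasProd.tendsto_prod_nat
  have h2 := hg.hasProd.tendsto_prod_nat
  have h3 : Tendsto (fun N => ∏ i ∈ Finset.range (N + 1), f i) atTop (nhds (∏' k, f k)) :=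
    h1.comp (tendsto_add_atTop_nat 1)
  have h4 : (fun N => ∏ i ∈ Finset.range (N + 1), f i)
      = fun N => f 0 * ∏ i ∈ Finset.range N, f (i + 1) := by
    funext N
    rw [Finset.prod_range_succ' f N]; ring
  rw [h4] at h3
  exact tendsto_nhds_unique h3 (tendsto_const_nhds.mul h2)

lemma poch_rec (p z : ℂ) (hp : ‖p‖ < 1) : poch z p = (1 - z) * poch (p * z) p := by
  unfold poch
  have hsh : (fun k : ℕ => 1 - p ^ (k + 1) * z) = fun k : ℕ => 1 - p ^ k * (p * z) := by
    funext k; ring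
  have := tprod_shift (fun k : ℕ => 1 - p ^ k * z) (multipliable_poch p z hp)
    (by rw [hsh]; exact multipliable_poch p (p * z) hp)
  rw [this]
  simp only [pow_zero, one_mul]
  congr 1
  rw [hsh]

lemma theta_shift (p z : ℂ) (hp : ‖p‖ < 1) (hp0 : p ≠ 0) (hz : z ≠ 0) :
    thetaF p (p * z) = -z⁻¹ * thetaF p z := by
  unfold thetaF
  have h1 : p * (p * z)⁻¹ = z⁻¹ := by field_simp
  rw [h1]
  have e1 : poch z p = (1 - z) * poch (p * z) p := poch_rec p z hp
  have e2 : poch z⁻¹ p = (1 - z⁻¹) * poch (p * z⁻¹) p := poch_rec p z⁻¹ hp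
  have key : (1 : ℂ) - z⁻¹ = -z⁻¹ * (1 - z) := by field_simp; ring
  rw [e1, e2, key]
  ring


section Helpers
variable {n : ℕ}

lemma split_ratio (x y : Fin n → Fin n → ℂ) :
    (∏ a : Fin n, ∏ b : Fin n, if a < b then x a b / y a b else 1)
      = (∏ a : Fin n, ∏ b : Fin n, if a < b then x a b else 1)
        / (∏ a : Fin n, ∏ b : Fin n, if a < b then y a b else 1) := by
  rw [← Finset.prod_div_distrib]
  refine Finset.prod_congr rfl fun a _ => ?_
  rw [← Finset.prod_div_distrib]
  refine Finset.prod_congr rfl fun b _ => ?_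
  split_ifs <;> simp

lemma prod_ite_ne_zero (M : Fin n → Fin n → ℂ) (h : ∀ a b : Fin n, a < b → M a b ≠ 0) :
    (∏ a : Fin n, ∏ b : Fin n, if a < b then M a b else 1) ≠ 0 := by
  rw [Finset.prod_ne_zero_iff]
  intro a _
  rw [Finset.prod_ne_zero_iff]
  intro b _
  split_ifs with hab
  · exact h a b hab
  · exact one_ne_zero

/-- normal form for Qfun -/
lemma Qfun_formula (k₀ : ℕ) (q : ℂ) (ζ ξ : Fin n → ℂ) :
    Qfun n k₀ q ζ ξ =
      ((∏ t : Fin n, ξ t / ζ t) ^ (n - 1)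
          * ((∏ a : Fin n, ∏ b : Fin n, if a < b then ζ b ^ 2 - q ^ 2 * ζ a ^ 2 else 1)
              / (∏ a : Fin n, ∏ b : Fin n, if a < b then ξ a ^ 2 - q ^ 2 * ξ b ^ 2 else 1)))
        ^ Nat.choose (n - 2) (k₀ - 1)
      * (((∏ t : Fin n, ξ t ^ (t : ℕ)) / ∏ t : Fin n, ζ t ^ (t : ℕ))
          * thetaF (q ^ 2) (-(∏ t : Fin n, ξ t / ζ t))) ^ Nat.choose n k₀ := by
  unfold Qfun
  rw [split_ratio]
  simp only [div_pow, Finset.prod_div_distrib, Finset.prod_pow]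

/-- pair form of the double product -/
lemma pairform (f : Fin n → Fin n → ℂ) :
    (∏ a : Fin n, ∏ b : Fin n, if a < b then f a b else 1)
      = ∏ p : Fin n × Fin n, if p.1 < p.2 then f p.1 p.2 else 1 := by
  rw [Fintype.prod_prod_type]

/-- swapping two adjacent indices in the antisymmetric-pair product -/
lemma swap_pair (f : Fin n → Fin n → ℂ) (i j : Fin n) (hij : (i : ℕ) + 1 = (j : ℕ)) :
    (∏ p : Fin n × Fin n,
        if p.1 < p.2 then f (Equiv.swap i j p.1) (Equiv.swap i j p.2) else 1) * f i j
      = (∏ p : Fin n × Fin n, if p.1 < p.2 then f p.1 p.2 else 1) * f j i := by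
  set σ := Equiv.swap i j with hσ
  have hiltj : i < j := by rw [Fin.lt_def]; omega
  have hinej : i ≠ j := ne_of_lt hiltj
  have hs : ∀ t : Fin n, ((σ t : Fin n) : ℕ)
      = if (t : ℕ) = (i : ℕ) then (j : ℕ) else if (t : ℕ) = (j : ℕ) then (i : ℕ) else (t : ℕ) := by
    intro t
    rcases eq_or_ne t i with h1 | h1
    · rw [show σ t = j by rw [h1, hσ]; exact Equiv.swap_apply_left i j, h1]
      rw [if_pos rfl]
    · rcases eq_or_ne t j with h2 | h2
      · rw [show σ t = i by rw [h2, hσ]; exact Equiv.swap_apply_right i j, h2]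
        rw [if_neg (by omega), if_pos rfl]
      · rw [show σ t = t by rw [hσ]; exact Equiv.swap_apply_of_ne_of_ne h1 h2]
        rw [if_neg (fun h => h1 (Fin.ext h)), if_neg (fun h => h2 (Fin.ext h))]
  -- step 1: reindex by σ × σ
  have step1 : (∏ p : Fin n × Fin n,
      if p.1 < p.2 then f (σ p.1) (σ p.2) else 1)
        = ∏ p : Fin n × Fin n, if σ p.1 < σ p.2 then f p.1 p.2 else 1 := by
    rw [← Equiv.prod_comp (σ.prodCongr σ)
      (fun p : Fin n × Fin n => if σ p.1 < σ p.2 then f p.1 p.2 else 1)]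
    refine Finset.prod_congr rfl fun p _ => ?_
    have hself : ∀ t, σ (σ t) = t := fun t => by rw [hσ]; exact Equiv.swap_apply_self i j t
    simp [Equiv.prodCongr_apply, Prod.map, hself]
  rw [step1]
  -- step 2: compare the two ite-products, pulling out the pairs (i,j) and (j,i)
  set F : Fin n × Fin n → ℂ := fun p => if p.1 < p.2 then f p.1 p.2 else 1 with hF
  set F' : Fin n × Fin n → ℂ := fun p => if σ p.1 < σ p.2 then f p.1 p.2 else 1 with hF'
  have hp12 : ((i, j) : Fin n × Fin n) ≠ (j, i) := fun h => hinej (congrArg Prod.fst h)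
  have hmem2 : ((j, i) : Fin n × Fin n) ∈ (Finset.univ.erase (i, j)) := by
    simp [Finset.mem_erase, Ne, Prod.mk.injEq]
    intro h; exact absurd h.symm hinej
  have expand : ∀ G : Fin n × Fin n → ℂ,
      (∏ p : Fin n × Fin n, G p)
        = G (i, j) * (G (j, i) * ∏ p ∈ (Finset.univ.erase (i, j)).erase (j, i), G p) := by
    intro G
    rw [← Finset.mul_prod_erase Finset.univ G (Finset.mem_univ (i, j)),
      ← Finset.mul_prod_erase _ G hmem2]
  have congrrest : (∏ p ∈ (Finset.univ.erase (i, j)).erase (j, i), F' p)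
      = ∏ p ∈ (Finset.univ.erase (i, j)).erase (j, i), F p := by
    refine Finset.prod_congr rfl fun p hp => ?_
    obtain ⟨a, b⟩ := p
    simp only [Finset.mem_erase, Ne, Prod.mk.injEq] at hp
    have h1 : ¬((a : ℕ) = (j : ℕ) ∧ (b : ℕ) = (i : ℕ)) := by
      intro h; exact hp.1 ⟨Fin.ext h.1, Fin.ext h.2⟩
    have h2 : ¬((a : ℕ) = (i : ℕ) ∧ (b : ℕ) = (j : ℕ)) := by
      intro h; exact hp.2.1 ⟨Fin.ext h.1, Fin.ext h.2⟩
    have hiff : (σ a < σ b) ↔ (a < b) := by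
      rw [Fin.lt_def, Fin.lt_def, hs a, hs b]
      split_ifs <;> omega
    simp only [hF, hF']
    by_cases hab : a < b
    · rw [if_pos hab, if_pos (hiff.2 hab)]
    · rw [if_neg hab, if_neg (fun h => hab (hiff.1 h))]
  have Fij : F (i, j) = f i j := by simp [hF, hiltj]
  have Fji : F (j, i) = 1 := by simp [hF, not_lt_of_gt hiltj, not_lt.2 (le_of_lt hiltj)]
  have F'ij : F' (i, j) = 1 := by
    have : ¬ (σ i < σ j) := by
      rw [Fin.lt_def, hs i, hs j]
      simp only [if_pos rfl]
      split_ifs <;> omega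
    simp [hF', this]
  have F'ji : F' (j, i) = f j i := by
    have : σ j < σ i := by
      rw [Fin.lt_def, hs i, hs j]
      simp only [if_pos rfl]
      split_ifs <;> omega
    simp [hF', this]
  rw [expand F, expand F', congrrest, Fij, Fji, F'ij, F'ji]
  ring

/-- swapping adjacent indices in `∏ ζ t ^ t` -/
lemma swap_row_pow (ζ : Fin n → ℂ) (i j : Fin n) (hij : (i : ℕ) + 1 = (j : ℕ)) :
    (∏ t : Fin n, ζ (Equiv.swap i j t) ^ (t : ℕ)) * ζ j
      = (∏ t : Fin n, ζ t ^ (t : ℕ)) * ζ i := by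
  set σ := Equiv.swap i j with hσ
  have hinej : i ≠ j := by intro h; rw [h] at hij; omega
  have hmem2 : j ∈ Finset.univ.erase i := by simp [Finset.mem_erase, hinej.symm, Ne]
  have expand : ∀ G : Fin n → ℂ,
      (∏ t : Fin n, G t) = G i * (G j * ∏ t ∈ (Finset.univ.erase i).erase j, G t) := by
    intro G
    rw [← Finset.mul_prod_erase Finset.univ G (Finset.mem_univ i),
      ← Finset.mul_prod_erase _ G hmem2]
  have congrrest : (∏ t ∈ (Finset.univ.erase i).erase j, ζ (σ t) ^ (t : ℕ))
      = ∏ t ∈ (Finset.univ.erase i).erase j, ζ t ^ (t : ℕ) := by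
    refine Finset.prod_congr rfl fun t ht => ?_
    simp only [Finset.mem_erase] at ht
    rw [hσ, Equiv.swap_apply_of_ne_of_ne ht.2.1 ht.1]
  rw [expand (fun t => ζ (σ t) ^ (t : ℕ)), expand (fun t => ζ t ^ (t : ℕ)), congrrest]
  simp only [hσ, Equiv.swap_apply_left, Equiv.swap_apply_right]
  have hj : (j : ℕ) = (i : ℕ) + 1 := hij.symm
  rw [hj, pow_succ, pow_succ]
  ring

/-- triangular form of the double product, over `ℕ` -/
lemma tri (G : ℕ → ℕ → ℂ) :
    (∏ a : Fin n, ∏ b : Fin n, if a < b then G (a : ℕ) (b : ℕ) else 1)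
      = ∏ b ∈ Finset.range n, ∏ a ∈ Finset.range b, G a b := by
  have step1 : (∏ a : Fin n, ∏ b : Fin n, if a < b then G (a : ℕ) (b : ℕ) else 1)
      = ∏ a ∈ Finset.range n, ∏ b ∈ Finset.range n, if a < b then G a b else 1 := by
    rw [← Fin.prod_univ_eq_prod_range (fun a => ∏ b ∈ Finset.range n, if a < b then G a b else 1) n]
    refine Finset.prod_congr rfl fun a _ => ?_
    rw [← Fin.prod_univ_eq_prod_range (fun b => if (a : ℕ) < b then G (a : ℕ) b else 1) n]
    refine Finset.prod_congr rfl fun b _ => ?_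
    by_cases h : (a:ℕ) < (b:ℕ)
    · rw [if_pos h, if_pos (Fin.lt_def.mpr h)]
    · rw [if_neg h, if_neg (fun hh => h (Fin.lt_def.mp hh))]
  rw [step1, Finset.prod_comm]
  refine Finset.prod_congr rfl fun b hb => ?_
  rw [Finset.mem_range] at hb
  rw [← Finset.prod_filter]
  congr 1
  ext x
  simp only [Finset.mem_filter, Finset.mem_range]
  omega

lemma tri_split (G : ℕ → ℕ → ℂ) (m : ℕ) :
    (∏ b ∈ Finset.range (m + 1), ∏ a ∈ Finset.range b, G a b)
      = (∏ b ∈ Finset.range m, ∏ a ∈ Finset.range b, G (a + 1) (b + 1))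
        * ∏ b ∈ Finset.range m, G 0 (b + 1) := by
  rw [Finset.prod_range_succ' (fun b => ∏ a ∈ Finset.range b, G a b) m]
  simp only [Finset.range_zero, Finset.prod_empty, mul_one]
  rw [← Finset.prod_mul_distrib]
  refine Finset.prod_congr rfl fun b _ => ?_
  rw [Finset.prod_range_succ' (fun a => G a (b + 1)) b]

lemma tri_rot (G : ℕ → ℕ → ℂ) (m : ℕ) (hG : ∀ a, a < m → G (a + 1) (m + 1) = G (a + 1) 0) :
    (∏ b ∈ Finset.range (m + 1), ∏ a ∈ Finset.range b, G (a + 1) (b + 1))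
      = (∏ b ∈ Finset.range m, ∏ a ∈ Finset.range b, G (a + 1) (b + 1))
        * ∏ a ∈ Finset.range m, G (a + 1) 0 := by
  rw [Finset.prod_range_succ]
  congr 1
  refine Finset.prod_congr rfl fun a ha => ?_
  rw [Finset.mem_range] at ha
  exact hG a ha

lemma rot_row (W : ℕ → ℂ) (m : ℕ) (hW : W (m + 1) = W 0) :
    (∏ t ∈ Finset.range (m + 1), W (t + 1)) = ∏ t ∈ Finset.range (m + 1), W t := by
  rw [Finset.prod_range_succ, hW, Finset.prod_range_succ' W m]

lemma rot_row_pow (W : ℕ → ℂ) (m : ℕ) (hW : W (m + 1) = W 0) :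
    (∏ t ∈ Finset.range (m + 1), W (t + 1) ^ t) * ∏ t ∈ Finset.range (m + 1), W t
      = W 0 ^ (m + 1) * ∏ t ∈ Finset.range (m + 1), W t ^ t := by
  rw [Finset.prod_range_succ (fun t => W (t + 1) ^ t) m, hW,
    Finset.prod_range_succ' W m, Finset.prod_range_succ' (fun t => W t ^ t) m]
  have h : (∏ t ∈ Finset.range m, W (t + 1) ^ (t + 1))
      = (∏ t ∈ Finset.range m, W (t + 1) ^ t) * ∏ t ∈ Finset.range m, W (t + 1) := by
    rw [← Finset.prod_mul_distrib]
    exact Finset.prod_congr rfl fun t _ => pow_succ _ _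
  rw [h]
  ring


end Helpers

section Parts
variable {n : ℕ}

lemma part1 (k₀ : ℕ) (q : ℂ) (hq : q ≠ 0)
    (ζ ξ : Fin n → ℂ) (hζ : ∀ a, ζ a ≠ 0) (hξ : ∀ a, ξ a ≠ 0)
    (hQD : QDenOK n q ξ) (i : Fin n) (hi : (i : ℕ) + 1 < n)
    (hden : ζ ⟨(i : ℕ) + 1, hi⟩ ^ 2 - q ^ 2 * ζ i ^ 2 ≠ 0) :
    (ζ ⟨(i : ℕ) + 1, hi⟩ / ζ i) ^ Nat.choose n k₀
      * ((ζ i ^ 2 - q ^ 2 * ζ ⟨(i : ℕ) + 1, hi⟩ ^ 2)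
          / (ζ ⟨(i : ℕ) + 1, hi⟩ ^ 2 - q ^ 2 * ζ i ^ 2)) ^ Nat.choose (n - 2) (k₀ - 1)
      * Qfun n k₀ q ζ ξ
    = Qfun n k₀ q (fun t => ζ (Equiv.swap i ⟨(i : ℕ) + 1, hi⟩ t)) ξ := by
  set j : Fin n := ⟨(i : ℕ) + 1, hi⟩ with hjdef
  have hij : (i : ℕ) + 1 = (j : ℕ) := rfl
  set σ := Equiv.swap i j with hσ
  set A : ℂ := ∏ a : Fin n, ∏ b : Fin n, if a < b then ζ b ^ 2 - q ^ 2 * ζ a ^ 2 else 1 with hA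
  set A' : ℂ := ∏ a : Fin n, ∏ b : Fin n,
      if a < b then ζ (σ b) ^ 2 - q ^ 2 * ζ (σ a) ^ 2 else 1 with hA'
  set D : ℂ := ∏ a : Fin n, ∏ b : Fin n, if a < b then ξ a ^ 2 - q ^ 2 * ξ b ^ 2 else 1 with hD
  set Pz : ℂ := ∏ t : Fin n, ζ t ^ (t : ℕ) with hPz
  set Pz' : ℂ := ∏ t : Fin n, ζ (σ t) ^ (t : ℕ) with hPz'
  set Px : ℂ := ∏ t : Fin n, ξ t ^ (t : ℕ) with hPx
  set w : ℂ := ∏ t : Fin n, ξ t / ζ t with hw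
  -- component relations
  have hDne : D ≠ 0 := prod_ite_ne_zero _ hQD
  have hNij : ζ j ^ 2 - q ^ 2 * ζ i ^ 2 ≠ 0 := hden
  have hArel : A' * (ζ j ^ 2 - q ^ 2 * ζ i ^ 2) = A * (ζ i ^ 2 - q ^ 2 * ζ j ^ 2) := by
    rw [hA, hA', pairform, pairform]
    exact swap_pair (fun a b => ζ b ^ 2 - q ^ 2 * ζ a ^ 2) i j hij
  have hPrel : Pz' * ζ j = Pz * ζ i := swap_row_pow ζ i j hij
  have hwswap : (∏ t : Fin n, ξ t / ζ (σ t)) = w := by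
    rw [hw, Finset.prod_div_distrib, Finset.prod_div_distrib, Equiv.prod_comp σ ζ]
  -- rewrite both sides
  rw [Qfun_formula, Qfun_formula, hwswap]
  rw [← hA, ← hA', ← hD, ← hPz, ← hPz', ← hPx, ← hw]
  set T : ℂ := thetaF (q ^ 2) (-w) with hT
  -- nonvanishing facts
  have hζi : ζ i ≠ 0 := hζ i
  have hζj : ζ j ≠ 0 := hζ j
  have hPzne : Pz ≠ 0 := Finset.prod_ne_zero_iff.2 fun t _ => pow_ne_zero _ (hζ t)
  have hA'eq : A' = A * (ζ i ^ 2 - q ^ 2 * ζ j ^ 2) / (ζ j ^ 2 - q ^ 2 * ζ i ^ 2) := by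
    rw [eq_div_iff hNij]
    linear_combination hArel
  have hPz'eq : Pz' = Pz * ζ i / ζ j := by
    field_simp
    linear_combination hPrel
  have base1 : (ζ i ^ 2 - q ^ 2 * ζ j ^ 2) / (ζ j ^ 2 - q ^ 2 * ζ i ^ 2) * (w ^ (n - 1) * (A / D))
      = w ^ (n - 1) * (A' / D) := by
    rw [hA'eq]
    field_simp
  have base2 : ζ j / ζ i * (Px / Pz * T) = Px / Pz' * T := by
    rw [hPz'eq]
    field_simp
  rw [← base1, ← base2]
  simp only [mul_pow]
  ring

lemma part2 (k₀ : ℕ) (q : ℂ) (hq : q ≠ 0)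
    (ζ ξ : Fin n → ℂ) (hζ : ∀ a, ζ a ≠ 0) (hξ : ∀ a, ξ a ≠ 0)
    (hQD : QDenOK n q ξ) (i : Fin n) (hi : (i : ℕ) + 1 < n)
    (hQD' : QDenOK n q (fun t => ξ (Equiv.swap i ⟨(i : ℕ) + 1, hi⟩ t))) :
    (ξ i / ξ ⟨(i : ℕ) + 1, hi⟩) ^ Nat.choose n k₀
      * ((ξ i ^ 2 - q ^ 2 * ξ ⟨(i : ℕ) + 1, hi⟩ ^ 2)
          / (ξ ⟨(i : ℕ) + 1, hi⟩ ^ 2 - q ^ 2 * ξ i ^ 2)) ^ Nat.choose (n - 2) (k₀ - 1)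
      * Qfun n k₀ q ζ ξ
    = Qfun n k₀ q ζ (fun t => ξ (Equiv.swap i ⟨(i : ℕ) + 1, hi⟩ t)) := by
  set j : Fin n := ⟨(i : ℕ) + 1, hi⟩ with hjdef
  have hij : (i : ℕ) + 1 = (j : ℕ) := rfl
  have hiltj : i < j := by rw [Fin.lt_def]; omega
  set σ := Equiv.swap i j with hσ
  set A : ℂ := ∏ a : Fin n, ∏ b : Fin n, if a < b then ζ b ^ 2 - q ^ 2 * ζ a ^ 2 else 1 with hA
  set D : ℂ := ∏ a : Fin n, ∏ b : Fin n, if a < b then ξ a ^ 2 - q ^ 2 * ξ b ^ 2 else 1 with hD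
  set D' : ℂ := ∏ a : Fin n, ∏ b : Fin n,
      if a < b then ξ (σ a) ^ 2 - q ^ 2 * ξ (σ b) ^ 2 else 1 with hD'
  set Pz : ℂ := ∏ t : Fin n, ζ t ^ (t : ℕ) with hPz
  set Px : ℂ := ∏ t : Fin n, ξ t ^ (t : ℕ) with hPx
  set Px' : ℂ := ∏ t : Fin n, ξ (σ t) ^ (t : ℕ) with hPx'
  set w : ℂ := ∏ t : Fin n, ξ t / ζ t with hw
  have hDne : D ≠ 0 := prod_ite_ne_zero _ hQD
  have hgij : ξ i ^ 2 - q ^ 2 * ξ j ^ 2 ≠ 0 := hQD i j hiltj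
  have hgji : ξ j ^ 2 - q ^ 2 * ξ i ^ 2 ≠ 0 := by
    have := hQD' i j hiltj
    simpa [hσ, Equiv.swap_apply_left, Equiv.swap_apply_right] using this
  have hDrel : D' * (ξ i ^ 2 - q ^ 2 * ξ j ^ 2) = D * (ξ j ^ 2 - q ^ 2 * ξ i ^ 2) := by
    rw [hD, hD', pairform, pairform]
    exact swap_pair (fun a b => ξ a ^ 2 - q ^ 2 * ξ b ^ 2) i j hij
  have hPrel : Px' * ξ j = Px * ξ i := swap_row_pow ξ i j hij
  have hwswap : (∏ t : Fin n, ξ (σ t) / ζ t) = w := by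
    rw [hw, Finset.prod_div_distrib, Finset.prod_div_distrib, Equiv.prod_comp σ ξ]
  rw [Qfun_formula, Qfun_formula, hwswap]
  rw [← hA, ← hD, ← hD', ← hPz, ← hPx, ← hPx', ← hw]
  set T : ℂ := thetaF (q ^ 2) (-w) with hT
  have hξi : ξ i ≠ 0 := hξ i
  have hξj : ξ j ≠ 0 := hξ j
  have hPzne : Pz ≠ 0 := Finset.prod_ne_zero_iff.2 fun t _ => pow_ne_zero _ (hζ t)
  have hD'eq : D' = D * (ξ j ^ 2 - q ^ 2 * ξ i ^ 2) / (ξ i ^ 2 - q ^ 2 * ξ j ^ 2) := by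
    rw [eq_div_iff hgij]
    linear_combination hDrel
  have hPx'eq : Px' = Px * ξ i / ξ j := by
    field_simp
    linear_combination hPrel
  have base1 : (ξ i ^ 2 - q ^ 2 * ξ j ^ 2) / (ξ j ^ 2 - q ^ 2 * ξ i ^ 2) * (w ^ (n - 1) * (A / D))
      = w ^ (n - 1) * (A / D') := by
    rw [hD'eq]
    field_simp
  have base2 : ξ i / ξ j * (Px / Pz * T) = Px' / Pz * T := by
    rw [hPx'eq]
    field_simp
  rw [← base1, ← base2]
  simp only [mul_pow]
  ring

lemma part3 (k₀ : ℕ) (hn : 2 ≤ n) (q : ℂ) (hq : q ≠ 0) (hq1 : ‖q‖ < 1)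
    (ζ ξ : Fin n → ℂ) (hζ : ∀ a, ζ a ≠ 0) (hξ : ∀ a, ξ a ≠ 0) (hQD : QDenOK n q ξ) :
    Qfun n k₀ q
        (Function.update ζ ⟨0, by omega⟩ ((q ^ 2)⁻¹ * ζ ⟨0, by omega⟩)) ξ
      = Qfun n k₀ q
          (fun t => ζ ⟨((t : ℕ) + 1) % n, Nat.mod_lt _ (by omega)⟩) ξ
        * (-1 : ℂ) ^ ((n - 1) * Nat.choose (n - 2) (k₀ - 1))
        * (∏ j : Fin n, ζ ⟨0, by omega⟩ / ξ j) ^ Nat.choose n k₀ := by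
  have hn0 : 0 < n := by omega
  obtain ⟨m, hm⟩ : ∃ m, n = m + 1 := ⟨n - 1, by omega⟩
  have hnm : n - 1 = m := by omega
  set z0 : Fin n := ⟨0, by omega⟩ with hz0
  set v : ℂ := (q ^ 2)⁻¹ * ζ z0 with hv
  set ρf : Fin n → ℂ := fun t => ζ ⟨((t : ℕ) + 1) % n, Nat.mod_lt _ (by omega)⟩ with hρf
  set Z : ℕ → ℂ := fun t => ζ ⟨t % n, Nat.mod_lt _ hn0⟩ with hZdef
  set H : ℕ → ℂ := fun t => if t = 0 then v else Z t with hHdef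
  -- basic value facts
  have hZ : ∀ a : Fin n, ζ a = Z (a : ℕ) := by
    intro a
    rw [hZdef]
    congr 1
    exact Fin.ext (Nat.mod_eq_of_lt a.isLt).symm
  have hζt : ∀ a : Fin n, Function.update ζ z0 v a = H (a : ℕ) := by
    intro a
    by_cases ha : a = z0
    · subst ha
      rw [Function.update_self, hHdef]
      simp [hz0]
    · rw [Function.update_of_ne ha, hHdef]
      have hane : (a : ℕ) ≠ 0 := by
        intro h
        exact ha (Fin.ext (by simp [hz0, h]))
      simp only [if_neg hane]
      exact hZ a
  have hρval : ∀ a : Fin n, ρf a = Z ((a : ℕ) + 1) := fun a => rfl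
  have hZwrap : Z (m + 1) = Z 0 :=
    congrArg ζ (Fin.ext (show (m + 1) % n = 0 % n by rw [← hm, Nat.mod_self, Nat.zero_mod]))
  have hZ0 : ζ z0 = Z 0 := by
    have := hZ z0
    simpa [hz0] using this
  -- the Num relation
  have hAup : (∏ a : Fin n, ∏ b : Fin n,
        if a < b then Function.update ζ z0 v b ^ 2 - q ^ 2 * Function.update ζ z0 v a ^ 2 else 1)
      = (-1 : ℂ) ^ (n - 1) * (((q ^ 2) ^ (n - 1))⁻¹)
        * (∏ a : Fin n, ∏ b : Fin n, if a < b then ρf b ^ 2 - q ^ 2 * ρf a ^ 2 else 1) := by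
    have s1 : (∏ a : Fin n, ∏ b : Fin n,
        if a < b then Function.update ζ z0 v b ^ 2 - q ^ 2 * Function.update ζ z0 v a ^ 2 else 1)
        = ∏ a : Fin n, ∏ b : Fin n,
            if a < b then H (b : ℕ) ^ 2 - q ^ 2 * H (a : ℕ) ^ 2 else 1 := by
      refine Finset.prod_congr rfl fun a _ => Finset.prod_congr rfl fun b _ => ?_
      rw [hζt a, hζt b]
    have s2 : (∏ a : Fin n, ∏ b : Fin n, if a < b then ρf b ^ 2 - q ^ 2 * ρf a ^ 2 else 1)
        = ∏ a : Fin n, ∏ b : Fin n,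
            if a < b then Z ((b : ℕ) + 1) ^ 2 - q ^ 2 * Z ((a : ℕ) + 1) ^ 2 else 1 := by
      refine Finset.prod_congr rfl fun a _ => Finset.prod_congr rfl fun b _ => ?_
      rw [hρval a, hρval b]
    rw [s1, s2, tri (fun a b => H b ^ 2 - q ^ 2 * H a ^ 2),
      tri (fun a b => Z (b + 1) ^ 2 - q ^ 2 * Z (a + 1) ^ 2), hnm, hm]
    rw [tri_split (fun a b => H b ^ 2 - q ^ 2 * H a ^ 2) m,
      tri_rot (fun a b => Z b ^ 2 - q ^ 2 * Z a ^ 2) m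
        (fun a _ => by simp only [hZwrap])]
    have hC : (∏ b ∈ Finset.range m, ∏ a ∈ Finset.range b,
          (H (b + 1) ^ 2 - q ^ 2 * H (a + 1) ^ 2))
        = ∏ b ∈ Finset.range m, ∏ a ∈ Finset.range b,
            (Z (b + 1) ^ 2 - q ^ 2 * Z (a + 1) ^ 2) := by
      refine Finset.prod_congr rfl fun b _ => Finset.prod_congr rfl fun a _ => ?_
      simp [hHdef]
    have hR0 : (∏ b ∈ Finset.range m, (H (b + 1) ^ 2 - q ^ 2 * H 0 ^ 2))
        = ((-1) * (q ^ 2)⁻¹) ^ m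
            * ∏ a ∈ Finset.range m, (Z 0 ^ 2 - q ^ 2 * Z (a + 1) ^ 2) := by
      have e : ∀ b : ℕ, H (b + 1) ^ 2 - q ^ 2 * H 0 ^ 2
          = (-1 * (q ^ 2)⁻¹) * (Z 0 ^ 2 - q ^ 2 * Z (b + 1) ^ 2) := by
        intro b
        simp only [hHdef, Nat.succ_ne_zero, if_false, reduceIte]
        rw [hv, hZ0]
        field_simp
        ring
      rw [Finset.prod_congr rfl fun b _ => e b, Finset.prod_mul_distrib,
        Finset.prod_const, Finset.card_range]
    rw [hC, hR0]
    ring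
  -- the Pz relations
  have hPzup : (∏ t : Fin n, Function.update ζ z0 v t ^ (t : ℕ))
      = ∏ t : Fin n, ζ t ^ (t : ℕ) := by
    refine Finset.prod_congr rfl fun t _ => ?_
    by_cases ht : t = z0
    · subst ht
      have : ((z0 : Fin n) : ℕ) = 0 := by simp [hz0]
      rw [this, pow_zero, pow_zero]
    · rw [Function.update_of_ne ht]
  have hPρrel : (∏ t : Fin n, ρf t ^ (t : ℕ)) * (∏ t : Fin n, ζ t)
      = ζ z0 ^ n * ∏ t : Fin n, ζ t ^ (t : ℕ) := by
    have e1 : (∏ t : Fin n, ρf t ^ (t : ℕ)) = ∏ t ∈ Finset.range n, Z (t + 1) ^ t := by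
      rw [← Fin.prod_univ_eq_prod_range (fun u => Z (u + 1) ^ u) n]
      all_goals exact Finset.prod_congr rfl fun t _ => by rw [hρval t]
    have e2 : (∏ t : Fin n, ζ t) = ∏ t ∈ Finset.range n, Z t := by
      rw [← Fin.prod_univ_eq_prod_range Z n]
      exact Finset.prod_congr rfl fun t _ => hZ t
    have e3 : (∏ t : Fin n, ζ t ^ (t : ℕ)) = ∏ t ∈ Finset.range n, Z t ^ t := by
      rw [← Fin.prod_univ_eq_prod_range (fun u => Z u ^ u) n]
      exact Finset.prod_congr rfl fun t _ => by rw [hZ t]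
    rw [e1, e2, e3, hZ0, hm]
    exact rot_row_pow Z m hZwrap
  -- the w relations
  have hsplit : ∀ g : Fin n → ℂ, (∏ t : Fin n, ξ t / g t)
      = (ξ z0 / g z0) * ∏ t ∈ Finset.univ.erase z0, ξ t / g t := fun g =>
    (Finset.mul_prod_erase Finset.univ (fun t => ξ t / g t) (Finset.mem_univ z0)).symm
  have hwup : (∏ t : Fin n, ξ t / Function.update ζ z0 v t)
      = q ^ 2 * ∏ t : Fin n, ξ t / ζ t := by
    rw [hsplit (Function.update ζ z0 v), hsplit ζ, Function.update_self]
    have h1 : (∏ t ∈ Finset.univ.erase z0, ξ t / Function.update ζ z0 v t)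
        = ∏ t ∈ Finset.univ.erase z0, ξ t / ζ t := by
      refine Finset.prod_congr rfl fun t ht => ?_
      rw [Function.update_of_ne (Finset.mem_erase.1 ht).1]
    rw [h1, hv]
    have hζ0 : ζ z0 ≠ 0 := hζ z0
    field_simp
  have hwrot : (∏ t : Fin n, ξ t / ρf t) = ∏ t : Fin n, ξ t / ζ t := by
    rw [Finset.prod_div_distrib, Finset.prod_div_distrib]
    congr 1
    have e1 : (∏ t : Fin n, ρf t) = ∏ t ∈ Finset.range n, Z (t + 1) := by
      rw [← Fin.prod_univ_eq_prod_range (fun u => Z (u + 1)) n]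
      all_goals exact Finset.prod_congr rfl fun t _ => by rw [hρval t]
    have e2 : (∏ t : Fin n, ζ t) = ∏ t ∈ Finset.range n, Z t := by
      rw [← Fin.prod_univ_eq_prod_range Z n]
      exact Finset.prod_congr rfl fun t _ => hZ t
    rw [e1, e2, hm]
    exact rot_row Z m hZwrap
  -- assemble
  rw [Qfun_formula, Qfun_formula, hwup, hAup, hPzup, hwrot]
  set w : ℂ := ∏ t : Fin n, ξ t / ζ t with hw
  set Aρ : ℂ := ∏ a : Fin n, ∏ b : Fin n, if a < b then ρf b ^ 2 - q ^ 2 * ρf a ^ 2 else 1 with hAρ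
  set D : ℂ := ∏ a : Fin n, ∏ b : Fin n, if a < b then ξ a ^ 2 - q ^ 2 * ξ b ^ 2 else 1 with hD
  set Pz : ℂ := ∏ t : Fin n, ζ t ^ (t : ℕ) with hPz
  set Pρ : ℂ := ∏ t : Fin n, ρf t ^ (t : ℕ) with hPρ
  set Px : ℂ := ∏ t : Fin n, ξ t ^ (t : ℕ) with hPx
  set Pzeta : ℂ := ∏ t : Fin n, ζ t with hPzeta
  set Pxi : ℂ := ∏ t : Fin n, ξ t with hPxi
  -- theta shift
  have hwne : w ≠ 0 := by
    rw [hw]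
    exact Finset.prod_ne_zero_iff.2 fun t _ => div_ne_zero (hξ t) (hζ t)
  have hp2 : ‖q ^ 2‖ < 1 := by
    rw [norm_pow]
    calc ‖q‖ ^ 2 ≤ ‖q‖ := by
          nlinarith [norm_nonneg q]
      _ < 1 := hq1
  have hTt : thetaF (q ^ 2) (-(q ^ 2 * w)) = w⁻¹ * thetaF (q ^ 2) (-w) := by
    have harg : -(q ^ 2 * w) = q ^ 2 * (-w) := by ring
    rw [harg, theta_shift (q ^ 2) (-w) hp2 (pow_ne_zero 2 hq) (neg_ne_zero.2 hwne),
      inv_neg, neg_neg]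
  rw [hTt]
  set T : ℂ := thetaF (q ^ 2) (-w) with hT
  -- final algebra
  have hPzetane : Pzeta ≠ 0 := Finset.prod_ne_zero_iff.2 fun t _ => hζ t
  have hPxine : Pxi ≠ 0 := Finset.prod_ne_zero_iff.2 fun t _ => hξ t
  have hPzne : Pz ≠ 0 := Finset.prod_ne_zero_iff.2 fun t _ => pow_ne_zero _ (hζ t)
  have hDne : D ≠ 0 := prod_ite_ne_zero _ hQD
  have hζ0ne : ζ z0 ≠ 0 := hζ z0
  have hwfrac : w = Pxi / Pzeta := by
    rw [hw, hPxi, hPzeta, Finset.prod_div_distrib]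
  have hPρeq : Pρ = ζ z0 ^ n * Pz / Pzeta := by
    field_simp
    linear_combination hPρrel
  have hprodz0 : (∏ j : Fin n, ζ z0 / ξ j) = ζ z0 ^ n / Pxi := by
    rw [Finset.prod_div_distrib, Finset.prod_const, Finset.card_univ, Fintype.card_fin, hPxi]
  rw [hprodz0, hnm]
  have base1 : (q ^ 2 * w) ^ m * ((-1) ^ m * ((q ^ 2) ^ m)⁻¹ * Aρ / D)
      = (-1 : ℂ) ^ m * (w ^ m * (Aρ / D)) := by
    have hq2m : ((q : ℂ) ^ 2) ^ m ≠ 0 := pow_ne_zero _ (pow_ne_zero _ hq)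
    field_simp
    ring
  have base2 : Px / Pz * (w⁻¹ * T) = ζ z0 ^ n / Pxi * (Px / Pρ * T) := by
    rw [hPρeq, hwfrac]
    field_simp
  rw [base1, base2]
  simp only [mul_pow]
  ring

lemma part4 (k₀ : ℕ) (hn : 2 ≤ n) (q : ℂ) (hq : q ≠ 0) (hq1 : ‖q‖ < 1)
    (ζ ξ : Fin n → ℂ) (hζ : ∀ a, ζ a ≠ 0) (hξ : ∀ a, ξ a ≠ 0)
    (hQD1 : QDenOK n q (Function.update ξ ⟨0, by omega⟩ (q ^ 2 * ξ ⟨0, by omega⟩)))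
    (hQD2 : QDenOK n q (fun t => ξ ⟨((t : ℕ) + 1) % n, Nat.mod_lt _ (by omega)⟩)) :
    Qfun n k₀ q ζ (Function.update ξ ⟨0, by omega⟩ (q ^ 2 * ξ ⟨0, by omega⟩))
      = Qfun n k₀ q ζ (fun t => ξ ⟨((t : ℕ) + 1) % n, Nat.mod_lt _ (by omega)⟩)
        * (-1 : ℂ) ^ ((n - 1) * Nat.choose (n - 2) (k₀ - 1))
        * (∏ j : Fin n, ζ j / ξ ⟨0, by omega⟩) ^ Nat.choose n k₀ := by
  have hn0 : 0 < n := by omega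
  obtain ⟨m, hm⟩ : ∃ m, n = m + 1 := ⟨n - 1, by omega⟩
  have hnm : n - 1 = m := by omega
  set z0 : Fin n := ⟨0, by omega⟩ with hz0
  set v : ℂ := q ^ 2 * ξ z0 with hv
  set ρf : Fin n → ℂ := fun t => ξ ⟨((t : ℕ) + 1) % n, Nat.mod_lt _ (by omega)⟩ with hρf
  set X : ℕ → ℂ := fun t => ξ ⟨t % n, Nat.mod_lt _ hn0⟩ with hXdef
  set H : ℕ → ℂ := fun t => if t = 0 then v else X t with hHdef
  have hX : ∀ a : Fin n, ξ a = X (a : ℕ) := by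
    intro a
    rw [hXdef]
    congr 1
    exact Fin.ext (Nat.mod_eq_of_lt a.isLt).symm
  have hξt : ∀ a : Fin n, Function.update ξ z0 v a = H (a : ℕ) := by
    intro a
    by_cases ha : a = z0
    · subst ha
      rw [Function.update_self, hHdef]
      simp [hz0]
    · rw [Function.update_of_ne ha, hHdef]
      have hane : (a : ℕ) ≠ 0 := by
        intro h
        exact ha (Fin.ext (by simp [hz0, h]))
      simp only [if_neg hane]
      exact hX a
  have hρval : ∀ a : Fin n, ρf a = X ((a : ℕ) + 1) := fun a => rfl
  have hXwrap : X (m + 1) = X 0 :=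
    congrArg ξ (Fin.ext (show (m + 1) % n = 0 % n by rw [← hm, Nat.mod_self, Nat.zero_mod]))
  have hX0 : ξ z0 = X 0 := by
    have := hX z0
    simpa [hz0] using this
  -- the Den relation
  have hDup : (∏ a : Fin n, ∏ b : Fin n,
        if a < b then Function.update ξ z0 v a ^ 2 - q ^ 2 * Function.update ξ z0 v b ^ 2 else 1)
      = (-1 : ℂ) ^ (n - 1) * (q ^ 2) ^ (n - 1)
        * (∏ a : Fin n, ∏ b : Fin n, if a < b then ρf a ^ 2 - q ^ 2 * ρf b ^ 2 else 1) := by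
    have s1 : (∏ a : Fin n, ∏ b : Fin n,
        if a < b then Function.update ξ z0 v a ^ 2 - q ^ 2 * Function.update ξ z0 v b ^ 2 else 1)
        = ∏ a : Fin n, ∏ b : Fin n,
            if a < b then H (a : ℕ) ^ 2 - q ^ 2 * H (b : ℕ) ^ 2 else 1 := by
      refine Finset.prod_congr rfl fun a _ => Finset.prod_congr rfl fun b _ => ?_
      rw [hξt a, hξt b]
    have s2 : (∏ a : Fin n, ∏ b : Fin n, if a < b then ρf a ^ 2 - q ^ 2 * ρf b ^ 2 else 1)
        = ∏ a : Fin n, ∏ b : Fin n,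
            if a < b then X ((a : ℕ) + 1) ^ 2 - q ^ 2 * X ((b : ℕ) + 1) ^ 2 else 1 := by
      refine Finset.prod_congr rfl fun a _ => Finset.prod_congr rfl fun b _ => ?_
      rw [hρval a, hρval b]
    rw [s1, s2, tri (fun a b => H a ^ 2 - q ^ 2 * H b ^ 2),
      tri (fun a b => X (a + 1) ^ 2 - q ^ 2 * X (b + 1) ^ 2), hnm, hm]
    rw [tri_split (fun a b => H a ^ 2 - q ^ 2 * H b ^ 2) m,
      tri_rot (fun a b => X a ^ 2 - q ^ 2 * X b ^ 2) m
        (fun a _ => by simp only [hXwrap])]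
    have hC : (∏ b ∈ Finset.range m, ∏ a ∈ Finset.range b,
          (H (a + 1) ^ 2 - q ^ 2 * H (b + 1) ^ 2))
        = ∏ b ∈ Finset.range m, ∏ a ∈ Finset.range b,
            (X (a + 1) ^ 2 - q ^ 2 * X (b + 1) ^ 2) := by
      refine Finset.prod_congr rfl fun b _ => Finset.prod_congr rfl fun a _ => ?_
      simp [hHdef]
    have hR0 : (∏ b ∈ Finset.range m, (H 0 ^ 2 - q ^ 2 * H (b + 1) ^ 2))
        = ((-1) * q ^ 2) ^ m
            * ∏ a ∈ Finset.range m, (X (a + 1) ^ 2 - q ^ 2 * X 0 ^ 2) := by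
      have e : ∀ b : ℕ, H 0 ^ 2 - q ^ 2 * H (b + 1) ^ 2
          = (-1 * q ^ 2) * (X (b + 1) ^ 2 - q ^ 2 * X 0 ^ 2) := by
        intro b
        simp only [hHdef, Nat.succ_ne_zero, if_false, reduceIte]
        rw [hv, hX0]
        ring
      rw [Finset.prod_congr rfl fun b _ => e b, Finset.prod_mul_distrib,
        Finset.prod_const, Finset.card_range]
    rw [hC, hR0]
    ring
  -- the Px relations
  have hPxup : (∏ t : Fin n, Function.update ξ z0 v t ^ (t : ℕ))
      = ∏ t : Fin n, ξ t ^ (t : ℕ) := by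
    refine Finset.prod_congr rfl fun t _ => ?_
    by_cases ht : t = z0
    · subst ht
      have : ((z0 : Fin n) : ℕ) = 0 := by simp [hz0]
      rw [this, pow_zero, pow_zero]
    · rw [Function.update_of_ne ht]
  have hPρrel : (∏ t : Fin n, ρf t ^ (t : ℕ)) * (∏ t : Fin n, ξ t)
      = ξ z0 ^ n * ∏ t : Fin n, ξ t ^ (t : ℕ) := by
    have e1 : (∏ t : Fin n, ρf t ^ (t : ℕ)) = ∏ t ∈ Finset.range n, X (t + 1) ^ t := by
      rw [← Fin.prod_univ_eq_prod_range (fun u => X (u + 1) ^ u) n]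
      all_goals exact Finset.prod_congr rfl fun t _ => by rw [hρval t]
    have e2 : (∏ t : Fin n, ξ t) = ∏ t ∈ Finset.range n, X t := by
      rw [← Fin.prod_univ_eq_prod_range X n]
      all_goals exact Finset.prod_congr rfl fun t _ => hX t
    have e3 : (∏ t : Fin n, ξ t ^ (t : ℕ)) = ∏ t ∈ Finset.range n, X t ^ t := by
      rw [← Fin.prod_univ_eq_prod_range (fun u => X u ^ u) n]
      all_goals exact Finset.prod_congr rfl fun t _ => by rw [hX t]
    rw [e1, e2, e3, hX0, hm]
    exact rot_row_pow X m hXwrap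
  -- the w relations
  have hsplit : ∀ g : Fin n → ℂ, (∏ t : Fin n, g t / ζ t)
      = (g z0 / ζ z0) * ∏ t ∈ Finset.univ.erase z0, g t / ζ t := fun g =>
    (Finset.mul_prod_erase Finset.univ (fun t => g t / ζ t) (Finset.mem_univ z0)).symm
  have hwup : (∏ t : Fin n, Function.update ξ z0 v t / ζ t)
      = q ^ 2 * ∏ t : Fin n, ξ t / ζ t := by
    rw [hsplit (Function.update ξ z0 v), hsplit ξ, Function.update_self]
    have h1 : (∏ t ∈ Finset.univ.erase z0, Function.update ξ z0 v t / ζ t)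
        = ∏ t ∈ Finset.univ.erase z0, ξ t / ζ t := by
      refine Finset.prod_congr rfl fun t ht => ?_
      rw [Function.update_of_ne (Finset.mem_erase.1 ht).1]
    rw [h1, hv, mul_div_assoc]
    ring
  have hwrot : (∏ t : Fin n, ρf t / ζ t) = ∏ t : Fin n, ξ t / ζ t := by
    rw [Finset.prod_div_distrib, Finset.prod_div_distrib]
    congr 1
    have e1 : (∏ t : Fin n, ρf t) = ∏ t ∈ Finset.range n, X (t + 1) := by
      rw [← Fin.prod_univ_eq_prod_range (fun u => X (u + 1)) n]
      all_goals exact Finset.prod_congr rfl fun t _ => by rw [hρval t]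
    have e2 : (∏ t : Fin n, ξ t) = ∏ t ∈ Finset.range n, X t := by
      rw [← Fin.prod_univ_eq_prod_range X n]
      all_goals exact Finset.prod_congr rfl fun t _ => hX t
    rw [e1, e2, hm]
    exact rot_row X m hXwrap
  -- assemble
  rw [Qfun_formula, Qfun_formula, hwup, hDup, hPxup, hwrot]
  set w : ℂ := ∏ t : Fin n, ξ t / ζ t with hw
  set A : ℂ := ∏ a : Fin n, ∏ b : Fin n, if a < b then ζ b ^ 2 - q ^ 2 * ζ a ^ 2 else 1 with hA
  set Dρ : ℂ := ∏ a : Fin n, ∏ b : Fin n, if a < b then ρf a ^ 2 - q ^ 2 * ρf b ^ 2 else 1 with hDρ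
  set Pz : ℂ := ∏ t : Fin n, ζ t ^ (t : ℕ) with hPz
  set Pρ : ℂ := ∏ t : Fin n, ρf t ^ (t : ℕ) with hPρ
  set Px : ℂ := ∏ t : Fin n, ξ t ^ (t : ℕ) with hPx
  set Pzeta : ℂ := ∏ t : Fin n, ζ t with hPzeta
  set Pxi : ℂ := ∏ t : Fin n, ξ t with hPxi
  have hwne : w ≠ 0 := by
    rw [hw]
    exact Finset.prod_ne_zero_iff.2 fun t _ => div_ne_zero (hξ t) (hζ t)
  have hp2 : ‖q ^ 2‖ < 1 := by
    rw [norm_pow]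
    calc ‖q‖ ^ 2 ≤ ‖q‖ := by
          nlinarith [norm_nonneg q]
      _ < 1 := hq1
  have hTt : thetaF (q ^ 2) (-(q ^ 2 * w)) = w⁻¹ * thetaF (q ^ 2) (-w) := by
    have harg : -(q ^ 2 * w) = q ^ 2 * (-w) := by ring
    rw [harg, theta_shift (q ^ 2) (-w) hp2 (pow_ne_zero 2 hq) (neg_ne_zero.2 hwne),
      inv_neg, neg_neg]
  rw [hTt]
  set T : ℂ := thetaF (q ^ 2) (-w) with hT
  have hPzetane : Pzeta ≠ 0 := Finset.prod_ne_zero_iff.2 fun t _ => hζ t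
  have hPxine : Pxi ≠ 0 := Finset.prod_ne_zero_iff.2 fun t _ => hξ t
  have hPzne : Pz ≠ 0 := Finset.prod_ne_zero_iff.2 fun t _ => pow_ne_zero _ (hζ t)
  have hPxne : Px ≠ 0 := Finset.prod_ne_zero_iff.2 fun t _ => pow_ne_zero _ (hξ t)
  have hDρne : Dρ ≠ 0 := prod_ite_ne_zero _ hQD2
  have hξ0ne : ξ z0 ≠ 0 := hξ z0
  have hwfrac : w = Pxi / Pzeta := by
    rw [hw, hPxi, hPzeta, Finset.prod_div_distrib]
  have hPρeq : Pρ = ξ z0 ^ n * Px / Pxi := by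
    field_simp
    linear_combination hPρrel
  have hprodz0 : (∏ j : Fin n, ζ j / ξ z0) = Pzeta / ξ z0 ^ n := by
    rw [Finset.prod_div_distrib, Finset.prod_const, Finset.card_univ, Fintype.card_fin, hPzeta]
  rw [hprodz0, hnm]
  have hsinv : (((-1 : ℂ)) ^ m)⁻¹ = (-1 : ℂ) ^ m := by
    rw [← inv_pow, inv_neg, inv_one]
  have expand : A / ((-1 : ℂ) ^ m * (q ^ 2) ^ m * Dρ)
      = (-1 : ℂ) ^ m * A / ((q ^ 2) ^ m * Dρ) := by
    rw [mul_assoc, ← div_div, div_eq_mul_inv A ((-1 : ℂ) ^ m), hsinv]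
    ring
  have base1 : (q ^ 2 * w) ^ m * (A / ((-1 : ℂ) ^ m * (q ^ 2) ^ m * Dρ))
      = (-1 : ℂ) ^ m * (w ^ m * (A / Dρ)) := by
    rw [expand]
    have hq2m : ((q : ℂ) ^ 2) ^ m ≠ 0 := pow_ne_zero _ (pow_ne_zero _ hq)
    field_simp
    ring
  have base2 : Px / Pz * (w⁻¹ * T) = Pzeta / ξ z0 ^ n * (Pρ / Pz * T) := by
    rw [hPρeq, hwfrac]
    have hξ0m : (ξ z0 : ℂ) ^ n ≠ 0 := pow_ne_zero _ hξ0ne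
    field_simp
  rw [base1, base2]
  simp only [mul_pow]
  ring

end Parts

/-- the function `Q` satisfies the system of difference equations
(exchange in `ζ`, exchange in `ξ`, shift in `ζ₁`, shift in `ξ₁`). -/
theorem Q_system (n k₀ : ℕ) (hn : 2 ≤ n) (hk₀ : 1 ≤ k₀) (hk₀' : k₀ ≤ n - 1)
    (q : ℂ) (hq0 : 0 < ‖q‖) (hq1 : ‖q‖ < 1) :
    (∀ (ζ ξ : Fin n → ℂ), (∀ a, ζ a ≠ 0) → (∀ a, ξ a ≠ 0) →
      QDenOK n q ξ →
      ∀ (i : Fin n) (hi : (i : ℕ) + 1 < n),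
        ζ ⟨(i : ℕ) + 1, hi⟩ ^ 2 - q ^ 2 * ζ i ^ 2 ≠ 0 →
        (ζ ⟨(i : ℕ) + 1, hi⟩ / ζ i) ^ Nat.choose n k₀
          * ((ζ i ^ 2 - q ^ 2 * ζ ⟨(i : ℕ) + 1, hi⟩ ^ 2)
              / (ζ ⟨(i : ℕ) + 1, hi⟩ ^ 2 - q ^ 2 * ζ i ^ 2)) ^ Nat.choose (n - 2) (k₀ - 1)
          * Qfun n k₀ q ζ ξ
        = Qfun n k₀ q (fun t => ζ (Equiv.swap i ⟨(i : ℕ) + 1, hi⟩ t)) ξ)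
    ∧ (∀ (ζ ξ : Fin n → ℂ), (∀ a, ζ a ≠ 0) → (∀ a, ξ a ≠ 0) →
      QDenOK n q ξ →
      ∀ (i : Fin n) (hi : (i : ℕ) + 1 < n),
        QDenOK n q (fun t => ξ (Equiv.swap i ⟨(i : ℕ) + 1, hi⟩ t)) →
        (ξ i / ξ ⟨(i : ℕ) + 1, hi⟩) ^ Nat.choose n k₀
          * ((ξ i ^ 2 - q ^ 2 * ξ ⟨(i : ℕ) + 1, hi⟩ ^ 2)
              / (ξ ⟨(i : ℕ) + 1, hi⟩ ^ 2 - q ^ 2 * ξ i ^ 2)) ^ Nat.choose (n - 2) (k₀ - 1)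
          * Qfun n k₀ q ζ ξ
        = Qfun n k₀ q ζ (fun t => ξ (Equiv.swap i ⟨(i : ℕ) + 1, hi⟩ t)))
    ∧ (∀ (ζ ξ : Fin n → ℂ), (∀ a, ζ a ≠ 0) → (∀ a, ξ a ≠ 0) →
      QDenOK n q ξ →
      Qfun n k₀ q
          (Function.update ζ ⟨0, by omega⟩ ((q ^ 2)⁻¹ * ζ ⟨0, by omega⟩)) ξ
        = Qfun n k₀ q
            (fun t => ζ ⟨((t : ℕ) + 1) % n, Nat.mod_lt _ (by omega)⟩) ξ
          * (-1 : ℂ) ^ ((n - 1) * Nat.choose (n - 2) (k₀ - 1))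
          * (∏ j : Fin n, ζ ⟨0, by omega⟩ / ξ j) ^ Nat.choose n k₀)
    ∧ (∀ (ζ ξ : Fin n → ℂ), (∀ a, ζ a ≠ 0) → (∀ a, ξ a ≠ 0) →
      QDenOK n q (Function.update ξ ⟨0, by omega⟩ (q ^ 2 * ξ ⟨0, by omega⟩)) →
      QDenOK n q (fun t => ξ ⟨((t : ℕ) + 1) % n, Nat.mod_lt _ (by omega)⟩) →
      Qfun n k₀ q ζ
          (Function.update ξ ⟨0, by omega⟩ (q ^ 2 * ξ ⟨0, by omega⟩))
        = Qfun n k₀ q ζ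
            (fun t => ξ ⟨((t : ℕ) + 1) % n, Nat.mod_lt _ (by omega)⟩)
          * (-1 : ℂ) ^ ((n - 1) * Nat.choose (n - 2) (k₀ - 1))
          * (∏ j : Fin n, ζ j / ξ ⟨0, by omega⟩) ^ Nat.choose n k₀) := by
  have hq : q ≠ 0 := by
    intro h
    simp [h] at hq0
  refine ⟨?_, ?_, ?_, ?_⟩
  · intro ζ ξ hζ hξ hQD i hi hden
    exact part1 k₀ q hq ζ ξ hζ hξ hQD i hi hden
  · intro ζ ξ hζ hξ hQD i hi hQD'
    exact part2 k₀ q hq ζ ξ hζ hξ hQD i hi hQD'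
  · intro ζ ξ hζ hξ hQD
    exact part3 k₀ hn q hq hq1 ζ ξ hζ hξ hQD
  · intro ζ ξ hζ hξ hQD1 hQD2
    exact part4 k₀ hn q hq hq1 ζ ξ hζ hξ hQD1 hQD2
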